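/- Let A, B be computable well-orderings of ℕ and let f be a computable reduction from E_min(A) to E_min(B) that is well-defined on c.e. sets. If min_A(W_e) ≤_A min_A(W_i), then min_B(W_{f(e)}) ≤_B min_B(W_{f(i)}). -/

import Mathlib

/-- The `e`-th computably enumerable set of natural numbers: the domain of the
`e`-th partial computable function. -/
def Wce (e : ℕ) : Set ℕ :=
  {x | ((Denumerable.ofNat Nat.Partrec.Code e).eval x).Dom}


/-- A computable well-ordering of ℕ: a computable (Bool-valued) binary relation
whose associated strict relation is a well-order on ℕ. -/
structure CompWO where
  r : ℕ → ℕ → Bool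
  comp : Computable₂ r
  wo : IsWellOrder ℕ (fun a b => r a b = true)

/-- `m` is the `A`-least element of `S`. -/
def IsMinOf (A : CompWO) (S : Set ℕ) (m : ℕ) : Prop :=
  m ∈ S ∧ ∀ x ∈ S, A.r x m = false

/-- The equivalence relation `E_min(A)` on indices of c.e. sets: `W_e` and `W_i`
have the same `A`-least element, or are both empty. -/
def Emin (A : CompWO) (e i : ℕ) : Prop :=
  (Wce e = ∅ ∧ Wce i = ∅) ∨ ∃ m, IsMinOf A (Wce e) m ∧ IsMinOf A (Wce i) m

/-- Computable reducibility of binary relations on ℕ. -/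
def CompReducible (E F : ℕ → ℕ → Prop) : Prop :=
  ∃ h : ℕ → ℕ, Computable h ∧ ∀ x y, E x y ↔ F (h x) (h y)

/-- The order type of a computable well-ordering. -/
noncomputable def CompWO.otype (A : CompWO) : Ordinal :=
  @Ordinal.type ℕ (fun a b => A.r a b = true) A.wo

/-- The `A`-rank of an element: the order type of its set of predecessors. -/
noncomputable def CompWO.rank (A : CompWO) (a : ℕ) : Ordinal :=
  @Ordinal.typein ℕ (fun a b => A.r a b = true) A.wo a

/-!
The engine is the monotonicity half of the Rice–Shapiro theorem: a c.e. property of indices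
that only depends on the set `W e` persists when `W e` is enlarged. Since `f` is well-defined on
c.e. sets, "`W (f e)` meets the computable set `p`" is such a property.

If `min_A W e <_A min_A W i`, the union `W e ∪ W i` has the same `A`-least element as `W e`, so
its image has `B`-least element `mb := min_B W (f e)`. Were `mb' := min_B W (f i) <_B mb`, the
property "`W (f x)` has an element `B`-below `mb`" would hold for `i` but fail for the larger
union. Comparing with an index of `∅` in the same way shows that `f` maps indices of nonempty
sets to indices of nonempty sets, so these minima exist.
-/

open Nat.Partrec (Code)
open Nat.Partrec.Code
open Encodable (encode decode)

theorem wce_encode (c : Code) : Wce (encode c) = {x | (eval c x).Dom} := by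
  simp only [Wce, Denumerable.ofNat_encode]

theorem exists_computable_wce_eq_dom {α : Type*} [Primcodable α] {F : α → ℕ →. ℕ}
    (hF : Partrec₂ F) : ∃ g : α → ℕ, Computable g ∧ ∀ a, Wce (g a) = {x | (F a x).Dom} := by
  have hG : Partrec fun n : ℕ => (decode (α := α) n.unpair.1 : Part α).bind
      fun a => F a n.unpair.2 :=
    (Computable.decode.comp (Computable.fst.comp Computable.unpair)).ofOption.bind
      (hF.comp Computable.snd (Computable.snd.comp (Computable.unpair.comp Computable.fst))).to₂
  obtain ⟨c, hc⟩ := exists_code.1 (Partrec.nat_iff.1 hG)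
  refine ⟨fun a => encode (curry c (encode a)),
    Computable.encode.comp (primrec₂_curry.to_comp.comp (Computable.const c) Computable.encode),
    fun a => ?_⟩
  ext x
  simp [wce_encode, eval_curry, hc]

theorem exists_wce_eq_empty : ∃ z, Wce z = ∅ := by
  obtain ⟨c, hc⟩ := exists_code.1 Nat.Partrec.none
  exact ⟨encode c, by simp [wce_encode, hc]⟩

theorem exists_wce_eq_union (s t : ℕ) : ∃ u, Wce u = Wce s ∪ Wce t := by
  obtain ⟨h, hh, hdom⟩ := Nat.Partrec.merge'
    (exists_code.2 ⟨Denumerable.ofNat Code s, rfl⟩) (exists_code.2 ⟨Denumerable.ofNat Code t, rfl⟩)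
  obtain ⟨c, rfl⟩ := exists_code.1 hh
  exact ⟨encode c, by rw [wce_encode]; exact Set.ext fun x => (hdom x).2⟩

theorem REPred.comp {α β : Type*} [Primcodable α] [Primcodable β] {P : β → Prop}
    (hP : REPred P) {g : α → β} (hg : Computable g) : REPred fun a => P (g a) :=
  Partrec.comp hP hg

theorem dom_eval_iff_exists_evaln_isSome {c : Code} {x : ℕ} :
    (eval c x).Dom ↔ ∃ k, (evaln k c x).isSome := by
  simp only [Part.dom_iff_mem, evaln_complete, Option.isSome_iff_exists, Option.mem_def]
  exact exists_comm

theorem rePred_exists_mem_wce {α : Type*} [Primcodable α] {h : α → ℕ} (hh : Computable h)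
    {p : ℕ → Bool} (hp : Computable p) : REPred fun a => ∃ y ∈ Wce (h a), p y = true := by
  set q : α → ℕ → Bool := fun a n =>
    (evaln n.unpair.1 (Denumerable.ofNat Code (h a)) n.unpair.2).isSome && p n.unpair.2
  have hq : Computable₂ q := by
    have hk : Computable fun z : α × ℕ => z.2.unpair.1 :=
      Computable.fst.comp (Computable.unpair.comp Computable.snd)
    have hy : Computable fun z : α × ℕ => z.2.unpair.2 :=
      Computable.snd.comp (Computable.unpair.comp Computable.snd)
    exact Primrec.and.to_comp.comp
      (Primrec.option_isSome.to_comp.comp (primrec_evaln.to_comp.comp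
        ((hk.pair ((Computable.ofNat Code).comp (hh.comp Computable.fst))).pair hy)))
      (hp.comp hy)
  refine (Partrec.rfind hq.partrec₂).dom_re.of_eq fun a => ?_
  simp only [Nat.rfind_dom, PFun.coe_val, Part.mem_some_iff, Part.some_dom, implies_true,
    and_true, q, Bool.and_eq_true, eq_comm (a := true)]
  constructor
  · rintro ⟨n, hk, hy⟩
    exact ⟨n.unpair.2, dom_eval_iff_exists_evaln_isSome.2 ⟨_, hk⟩, hy⟩
  · rintro ⟨y, hy, hpy⟩
    obtain ⟨k, hk⟩ := dom_eval_iff_exists_evaln_isSome.1 hy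
    exact ⟨Nat.pair k y, by simpa [Nat.unpair_pair] using ⟨hk, hpy⟩⟩

theorem REPred.mono_of_wce_subset {P : ℕ → Prop} (hP : REPred P)
    (hext : ∀ e i, Wce e = Wce i → (P e ↔ P i)) {s u : ℕ} (hsu : Wce s ⊆ Wce u) (hs : P s) :
    P u := by
  by_contra hu
  obtain ⟨k, hk, hkdom⟩ := Partrec.merge'
    (eval_part.comp (Computable.const (Denumerable.ofNat Code s)) Computable.snd)
    ((eval_part.comp Computable.fst (Computable.const 0)).bind
      (eval_part.comp (Computable.const (Denumerable.ofNat Code u))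
        (Computable.snd.comp Computable.fst)).to₂ :
      Partrec fun z : Code × ℕ => (eval z.1 0).bind fun _ => eval (Denumerable.ofNat Code u) z.2)
  -- `W (g c)` is `W u` if `c` halts on `0` and `W s` otherwise, so `P ∘ g` would be a
  -- c.e. description of the non-halting codes.
  obtain ⟨g, hg, hgW⟩ := exists_computable_wce_eq_dom hk.to₂
  have hmem : ∀ c x, x ∈ Wce (g c) ↔ x ∈ Wce s ∨ (eval c 0).Dom ∧ x ∈ Wce u := fun c x => by
    rw [hgW, Set.mem_ofPred, (hkdom (c, x)).2, Part.bind_dom, exists_prop]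
    rfl
  refine ComputablePred.halting_problem_not_re 0 ((hP.comp hg).of_eq fun c => ?_)
  by_cases hc : (eval c 0).Dom
  · have : Wce (g c) = Wce u := Set.ext fun x => by simpa [hmem, hc] using @hsu x
    simpa [hext _ _ this, hc] using hu
  · have : Wce (g c) = Wce s := Set.ext fun x => by simp [hmem, hc]
    simpa [hext _ _ this, hc] using hs

theorem exists_mem_wce_apply_mono {f : ℕ → ℕ} (hf : Computable f)
    (hwd : ∀ e i, Wce e = Wce i → Wce (f e) = Wce (f i)) {p : ℕ → Bool} (hp : Computable p)
    {s u : ℕ} (hsu : Wce s ⊆ Wce u) (hs : ∃ y ∈ Wce (f s), p y = true) :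
    ∃ y ∈ Wce (f u), p y = true :=
  (rePred_exists_mem_wce hf hp).mono_of_wce_subset (fun e i h => by rw [hwd e i h]) hsu hs

namespace CompWO

theorem exists_isMinOf (A : CompWO) {S : Set ℕ} (hS : S.Nonempty) : ∃ m, IsMinOf A S m := by
  obtain ⟨m, hm, hmin⟩ := A.wo.toIsWellFounded.wf.has_min S hS
  exact ⟨m, hm, fun x hx => Bool.eq_false_iff.2 (hmin x hx)⟩

theorem eq_or_r_of_r_eq_false (A : CompWO) {a b : ℕ} (h : A.r b a = false) :
    a = b ∨ A.r a b = true := by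
  have := A.wo
  rcases trichotomous_of (fun a b => A.r a b = true) a b with hlt | heq | hgt
  · exact Or.inr hlt
  · exact Or.inl heq
  · simp [h] at hgt

end CompWO

namespace IsMinOf

variable {A : CompWO} {S T : Set ℕ} {m m' : ℕ}

theorem unique (h : IsMinOf A S m) (h' : IsMinOf A S m') : m = m' := by
  rcases A.eq_or_r_of_r_eq_false (h'.2 m h.1) with heq | hlt
  · exact heq.symm
  · simp [h.2 m' h'.1] at hlt

theorem union_of_r (h : IsMinOf A S m) (h' : IsMinOf A T m') (hlt : A.r m m' = true) :
    IsMinOf A (S ∪ T) m := by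
  have := A.wo
  refine ⟨Or.inl h.1, fun x hx => hx.elim (h.2 x) fun hxT => ?_⟩
  by_contra hxm
  have : A.r x m' = true := trans_of (fun a b => A.r a b = true) (Bool.not_eq_false _ ▸ hxm) hlt
  simp [h'.2 x hxT] at this

theorem of_emin {e i : ℕ} (hE : Emin A e i) (h : IsMinOf A (Wce e) m) : IsMinOf A (Wce i) m := by
  rcases hE with ⟨he, -⟩ | ⟨n, hn, hn'⟩
  · simp [he, IsMinOf] at h
  · rwa [h.unique hn]

end IsMinOf

section Reduction

variable {A B : CompWO} {f : ℕ → ℕ}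

theorem nonempty_wce_apply_of_isMinOf (hf : Computable f)
    (hred : ∀ x y, Emin A x y ↔ Emin B (f x) (f y))
    (hwd : ∀ e i, Wce e = Wce i → Wce (f e) = Wce (f i)) {e m : ℕ} (hm : IsMinOf A (Wce e) m) :
    (Wce (f e)).Nonempty := by
  obtain ⟨z, hz⟩ := exists_wce_eq_empty
  by_contra hfe
  rw [Set.not_nonempty_iff_eq_empty] at hfe
  have hfz : (Wce (f z)).Nonempty := by
    rw [Set.nonempty_iff_ne_empty]
    intro hfz
    have := (hm.of_emin ((hred e z).2 (Or.inl ⟨hfe, hfz⟩))).1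
    simp [hz] at this
  obtain ⟨y, hy, -⟩ := exists_mem_wce_apply_mono hf hwd (Computable.const true)
    (hz ▸ Set.empty_subset (Wce e)) (p := fun _ => true) (hfz.imp fun _ hy => ⟨hy, rfl⟩)
  simp [hfe] at hy

theorem r_eq_false_of_isMinOf_of_r (hf : Computable f)
    (hred : ∀ x y, Emin A x y ↔ Emin B (f x) (f y))
    (hwd : ∀ e i, Wce e = Wce i → Wce (f e) = Wce (f i)) {e i m m' mb mb' : ℕ}
    (hm : IsMinOf A (Wce e) m) (hm' : IsMinOf A (Wce i) m') (hlt : A.r m m' = true)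
    (hmb : IsMinOf B (Wce (f e)) mb) (hmb' : IsMinOf B (Wce (f i)) mb') :
    B.r mb' mb = false := by
  obtain ⟨u, hu⟩ := exists_wce_eq_union e i
  have hmu : IsMinOf A (Wce u) m := hu ▸ hm.union_of_r hm' hlt
  have hmbu : IsMinOf B (Wce (f u)) mb := hmb.of_emin ((hred e u).1 (Or.inr ⟨m, hm, hmu⟩))
  by_contra hgt
  obtain ⟨y, hy, hyb⟩ := exists_mem_wce_apply_mono hf hwd (p := fun y => B.r y mb)
    (B.comp.comp Computable.id (Computable.const mb)) (hu ▸ Set.subset_union_right)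
    ⟨mb', hmb'.1, Bool.not_eq_false _ ▸ hgt⟩
  simp [hmbu.2 y hy] at hyb

end Reduction

/-- A computable reduction from E_min(A) to E_min(B) that is well-defined on c.e. sets
preserves the order of the least elements. -/
theorem stmt5 (A B : CompWO) (f : ℕ → ℕ) (hf : Computable f)
    (hred : ∀ x y, Emin A x y ↔ Emin B (f x) (f y))
    (hwd : ∀ e i, Wce e = Wce i → Wce (f e) = Wce (f i))
    (e i m m' : ℕ) (hm : IsMinOf A (Wce e) m) (hm' : IsMinOf A (Wce i) m')
    (hle : m = m' ∨ A.r m m' = true) :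
    ∃ mb mb', IsMinOf B (Wce (f e)) mb ∧ IsMinOf B (Wce (f i)) mb' ∧
      (mb = mb' ∨ B.r mb mb' = true) := by
  obtain ⟨mb, hmb⟩ := B.exists_isMinOf (nonempty_wce_apply_of_isMinOf hf hred hwd hm)
  obtain ⟨mb', hmb'⟩ := B.exists_isMinOf (nonempty_wce_apply_of_isMinOf hf hred hwd hm')
  refine ⟨mb, mb', hmb, hmb', ?_⟩
  rcases hle with rfl | hlt
  · exact Or.inl (hmb.unique (hmb'.of_emin ((hred i e).1 (Or.inr ⟨m, hm', hm⟩))))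
  · exact B.eq_or_r_of_r_eq_false (r_eq_false_of_isMinOf_of_r hf hred hwd hm hm' hlt hmb hmb')
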